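/- arXiv:1504.07778 — 3 statements merged into one kernel-verified Lean document; each statement's English description precedes it below -/
import Mathlib

section
/- Hölder's inequality for 𝓛^p(𝓧): if 1 ≤ p,q ≤ ∞ with 1/p + 1/q = 1 and F,G : 𝓧 → ℝ, then ‖FG‖_{𝓛¹(𝓧)} ≤ ‖F‖_{𝓛^p(𝓧)} · ‖G‖_{𝓛^q(𝓧)}. -/
open MeasureTheory Set Filter
open scoped ENNReal Classical

variable {X : Type*} [MetricSpace X] [MeasurableSpace X]

/-- Total mass of a measure, as a real number. -/
noncomputable def mass (ν : Measure X) : ℝ := (ν Set.univ).toReal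

/-- The support of a measure. -/
def msupp (ν : Measure X) : Set X := {x : X | ∀ ε : ℝ, 0 < ε → 0 < ν (Metric.ball x ε)}

/-- The set `𝓜` of measures dominated by `μ` with compact support. -/
def MM (μ : Measure X) : Set (Measure X) := {ν | ν ≤ μ ∧ IsCompact (msupp ν)}

/-- Gauge function `h` used in the definition of the mass transport metric. -/
def IsGauge (h : ℝ → ℝ) : Prop :=
  StrictMonoOn h (Set.Ici 0) ∧ ContinuousOn h (Set.Ici 0) ∧ h 0 = 0 ∧
  Tendsto (fun ε => h ε / ε) (nhdsWithin 0 (Set.Ioi 0)) (nhds 0) ∧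
  (∀ a b : ℝ, 0 ≤ a → 0 ≤ b → h a + h b ≤ h (a + b)) ∧
  Tendsto h atTop atTop

/-- `Γ_{ε,δ}(ν,η) ≠ ∅`: existence of a countable mass-transport decomposition. -/
def GammaDecomp (μ : Measure X) (ε δ : ℝ) (ν η : Measure X) : Prop :=
  ∃ νi ηi : ℕ → Measure X,
    (∀ i, νi i ∈ MM μ) ∧ (∀ i, ηi i ∈ MM μ) ∧
    ν = Measure.sum νi ∧ η = Measure.sum ηi ∧
    (∃ S : ℝ, HasSum (fun i => |mass (νi i) - mass (ηi i)|) S ∧ S ≤ δ) ∧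
    (∀ i, Metric.diam (msupp (νi i) ∪ msupp (ηi i)) ≤ ε)

/-- The mass transport metric `d_𝓜`. -/
noncomputable def dM (h : ℝ → ℝ) (μ : Measure X) (ν η : Measure X) : ℝ :=
  sInf {ε : ℝ | 0 < ε ∧ GammaDecomp μ ε (h ε) ν η}

/-- A rectifiable curve in `𝓜` subparametrized by arc-length: a `1`-Lipschitz map
`[0,b] → (𝓜, d_𝓜)`. -/
def IsCurveM (h : ℝ → ℝ) (μ : Measure X) (b : ℝ) (γ : ℝ → Measure X) : Prop :=
  0 ≤ b ∧ (∀ t ∈ Icc (0:ℝ) b, γ t ∈ MM μ) ∧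
  ∀ s ∈ Icc (0:ℝ) b, ∀ t ∈ Icc (0:ℝ) b, dM h μ (γ s) (γ t) ≤ |s - t|

/-- A rectifiable curve in `𝓧 = 𝓜 \ {0}` subparametrized by arc-length. -/
def IsCurveX (h : ℝ → ℝ) (μ : Measure X) (b : ℝ) (γ : ℝ → Measure X) : Prop :=
  IsCurveM h μ b γ ∧ ∀ t ∈ Icc (0:ℝ) b, γ t ≠ 0

/-- The mean value functional `F_f(η) = (1/‖η‖) ∫ f dη`. -/
noncomputable def FfM (f : X → ℝ) (η : Measure X) : ℝ := (∫ x, f x ∂η) / mass η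

/-- `r_F^ε(η)`. -/
noncomputable def rGradE (h : ℝ → ℝ) (μ : Measure X) (F : Measure X → ℝ) (ε : ℝ)
    (η : Measure X) : ℝ≥0∞ :=
  sSup {r : ℝ≥0∞ | ∃ (b : ℝ) (γ : ℝ → Measure X) (s : ℝ),
    IsCurveX h μ b γ ∧ γ 0 = η ∧ 0 < s ∧ s < ε ∧ s < b ∧
    r = ENNReal.ofReal (|F (γ s) - F η| / s)}

/-- The upper gradient `r_F(η) = lim_{ε→0} r_F^ε(η)`. -/
noncomputable def rGrad (h : ℝ → ℝ) (μ : Measure X) (F : Measure X → ℝ)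
    (η : Measure X) : ℝ≥0∞ :=
  ⨅ (ε : ℝ) (_ : 0 < ε), rGradE h μ F ε η

/-- Upper semicontinuous regularization along curves of `g : 𝓧 → [0,∞]`. -/
noncomputable def breveG (h : ℝ → ℝ) (μ : Measure X) (g : Measure X → ℝ≥0∞)
    (η : Measure X) : ℝ≥0∞ :=
  ⨅ (s : ℝ) (_ : 0 < s), sSup {r : ℝ≥0∞ | ∃ (b : ℝ) (γ : ℝ → Measure X) (t : ℝ),
    IsCurveX h μ b γ ∧ γ 0 = η ∧ 0 ≤ t ∧ t < s ∧ t ≤ b ∧ r = g (γ t)}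

/-- `sup { Σᵢ G(ηᵢ)^p ‖ηᵢ‖ }` over finite disjointly supported families in `𝓧`. -/
noncomputable def LpPow (μ : Measure X) (p : ℝ) (G : Measure X → ℝ≥0∞) : ℝ≥0∞ :=
  sSup {r : ℝ≥0∞ | ∃ (k : ℕ) (η : Fin k → Measure X),
    (∀ i, η i ∈ MM μ ∧ η i ≠ 0) ∧
    (∀ i j, i ≠ j → Disjoint (msupp (η i)) (msupp (η j))) ∧
    r = ∑ i, (G (η i)) ^ p * (η i) Set.univ}

/-- The `𝓛^p(𝓧)` norm of `F : 𝓧 → ℝ`. -/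
noncomputable def LpNorm (μ : Measure X) (p : ℝ) (F : Measure X → ℝ) : ℝ≥0∞ :=
  (LpPow μ p (fun η => ENNReal.ofReal |F η|)) ^ (1 / p)

/-- The `𝓛^p(𝓧)` norm for an extended exponent `p ∈ [1,∞]`. -/
noncomputable def LpNormE (μ : Measure X) (p : ℝ≥0∞) (F : Measure X → ℝ) : ℝ≥0∞ :=
  if p = ∞ then ⨆ (η : Measure X) (_ : η ∈ MM μ ∧ η ≠ 0), ENNReal.ofReal |F η|
  else LpNorm μ p.toReal F

/-! Hölder's inequality for finite sums, with weights `‖ηᵢ‖`, bounds the contribution of each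
finite disjointly supported family; the `𝓛^p` norms are suprema over exactly these families.
For `p = ∞` the factor `|F(ηᵢ)|` is simply bounded by the supremum of `|F|`. -/

theorem ENNReal.weighted_inner_le_Lp_mul_Lq {ι : Type*} (s : Finset ι) (a b w : ι → ℝ≥0∞)
    {p q : ℝ} (hpq : p.HolderConjugate q) :
    ∑ i ∈ s, a i * b i * w i ≤
      (∑ i ∈ s, a i ^ p * w i) ^ (1 / p) * (∑ i ∈ s, b i ^ q * w i) ^ (1 / q) := by
  have hw : ∀ i, w i ^ (1 / p) * w i ^ (1 / q) = w i := fun i => by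
    rw [← ENNReal.rpow_add_of_nonneg _ _ hpq.one_div_pos.le hpq.symm.one_div_pos.le,
      one_div, one_div, hpq.inv_add_inv_eq_one, ENNReal.rpow_one]
  have hpow : ∀ (c : ι → ℝ≥0∞) {r : ℝ}, 0 < r → ∀ i, (c i * w i ^ (1 / r)) ^ r = c i ^ r * w i :=
    fun c r hr i => by
      rw [ENNReal.mul_rpow_of_nonneg _ _ hr.le, ← ENNReal.rpow_mul, one_div_mul_cancel hr.ne',
        ENNReal.rpow_one]
  calc ∑ i ∈ s, a i * b i * w i
      = ∑ i ∈ s, (a i * w i ^ (1 / p)) * (b i * w i ^ (1 / q)) := by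
        refine Finset.sum_congr rfl fun i _ => ?_
        rw [mul_mul_mul_comm, hw]
    _ ≤ _ := ENNReal.inner_le_Lp_mul_Lq s _ _ hpq
    _ = _ := by simp only [hpow a hpq.pos, hpow b hpq.symm.pos]

section Families

variable {μ : Measure X} {k : ℕ} {η : Fin k → Measure X}

theorem sum_le_LpPow (hη : ∀ i, η i ∈ MM μ ∧ η i ≠ 0)
    (hdisj : ∀ i j, i ≠ j → Disjoint (msupp (η i)) (msupp (η j))) (p : ℝ)
    (G : Measure X → ℝ≥0∞) :
    ∑ i, G (η i) ^ p * η i univ ≤ LpPow μ p G :=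
  le_sSup ⟨k, η, hη, hdisj, rfl⟩

theorem LpPow_le {p : ℝ} {G : Measure X → ℝ≥0∞} {c : ℝ≥0∞}
    (h : ∀ (k : ℕ) (η : Fin k → Measure X), (∀ i, η i ∈ MM μ ∧ η i ≠ 0) →
      (∀ i j, i ≠ j → Disjoint (msupp (η i)) (msupp (η j))) →
      ∑ i, G (η i) ^ p * η i univ ≤ c) :
    LpPow μ p G ≤ c :=
  sSup_le fun _ ⟨k, η, hη, hdisj, hr⟩ => hr ▸ h k η hη hdisj

end Families

section LpNormE

variable (μ : Measure X) (F : Measure X → ℝ)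

theorem LpNormE_one : LpNormE μ 1 F = LpPow μ 1 (fun η => ENNReal.ofReal |F η|) := by
  simp [LpNormE, LpNorm]

theorem LpNormE_of_ne_top {p : ℝ≥0∞} (hp : p ≠ ∞) : LpNormE μ p F = LpNorm μ p.toReal F :=
  if_neg hp

variable {μ} in
theorem ofReal_abs_le_LpNormE_top {η : Measure X} (hη : η ∈ MM μ ∧ η ≠ 0) :
    ENNReal.ofReal |F η| ≤ LpNormE μ ∞ F := by
  rw [LpNormE, if_pos rfl]
  exact le_iSup₂ (f := fun η _ => ENNReal.ofReal |F η|) η hη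

theorem LpPow_one_mul_le_LpNormE_top_mul_LpPow_one (G : Measure X → ℝ) :
    LpPow μ 1 (fun η => ENNReal.ofReal |F η * G η|) ≤
      LpNormE μ ∞ F * LpPow μ 1 (fun η => ENNReal.ofReal |G η|) := by
  refine LpPow_le fun k η hη hdisj => ?_
  calc ∑ i, ENNReal.ofReal |F (η i) * G (η i)| ^ (1 : ℝ) * η i univ
      = ∑ i, ENNReal.ofReal |F (η i)| * (ENNReal.ofReal |G (η i)| ^ (1 : ℝ) * η i univ) := by
        simp only [ENNReal.rpow_one, abs_mul, ENNReal.ofReal_mul (abs_nonneg _), mul_assoc]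
    _ ≤ ∑ i, LpNormE μ ∞ F * (ENNReal.ofReal |G (η i)| ^ (1 : ℝ) * η i univ) :=
        Finset.sum_le_sum fun i _ => mul_le_mul_left (ofReal_abs_le_LpNormE_top F (hη i)) _
    _ ≤ _ := by
        rw [← Finset.mul_sum]
        exact mul_le_mul_right (sum_le_LpPow hη hdisj 1 _) _

theorem LpPow_one_mul_le_LpNorm_mul_LpNorm {p q : ℝ} (hpq : p.HolderConjugate q)
    (G : Measure X → ℝ) :
    LpPow μ 1 (fun η => ENNReal.ofReal |F η * G η|) ≤ LpNorm μ p F * LpNorm μ q G := by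
  refine LpPow_le fun k η hη hdisj => ?_
  calc ∑ i, ENNReal.ofReal |F (η i) * G (η i)| ^ (1 : ℝ) * η i univ
      = ∑ i, ENNReal.ofReal |F (η i)| * ENNReal.ofReal |G (η i)| * η i univ := by
        simp only [ENNReal.rpow_one, abs_mul, ENNReal.ofReal_mul (abs_nonneg _)]
    _ ≤ _ := ENNReal.weighted_inner_le_Lp_mul_Lq _ _ _ _ hpq
    _ ≤ _ := mul_le_mul'
        (ENNReal.rpow_le_rpow (sum_le_LpPow hη hdisj p _) hpq.one_div_pos.le)
        (ENNReal.rpow_le_rpow (sum_le_LpPow hη hdisj q _) hpq.symm.one_div_pos.le)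

end LpNormE

theorem stmt10_general {X : Type*} [MetricSpace X] [MeasurableSpace X]
    (μ : Measure X)
    (p q : ℝ≥0∞) (hpq : p⁻¹ + q⁻¹ = 1)
    (F G : Measure X → ℝ) :
    LpNormE μ 1 (fun η => F η * G η) ≤ LpNormE μ p F * LpNormE μ q G := by
  have : p.HolderConjugate q := ENNReal.holderConjugate_iff.mpr hpq
  rw [LpNormE_one]
  rcases eq_or_ne p ∞ with rfl | hp
  · rw [(ENNReal.HolderConjugate.eq_top_iff_eq_one ∞ q).mp rfl, LpNormE_one]
    exact LpPow_one_mul_le_LpNormE_top_mul_LpPow_one μ F G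
  rcases eq_or_ne q ∞ with rfl | hq
  · rw [(ENNReal.HolderConjugate.eq_top_iff_eq_one ∞ p).mp rfl, LpNormE_one, mul_comm]
    simpa only [mul_comm (F _)] using LpPow_one_mul_le_LpNormE_top_mul_LpPow_one μ G F
  rw [LpNormE_of_ne_top μ F hp, LpNormE_of_ne_top μ G hq]
  exact LpPow_one_mul_le_LpNorm_mul_LpNorm μ F (ENNReal.HolderConjugate.toReal_of_ne_top hp hq) G

/-- Hölder's inequality for `𝓛^p(𝓧)`:
`‖FG‖_{𝓛¹} ≤ ‖F‖_{𝓛^p} ‖G‖_{𝓛^q}` for conjugate exponents `1 ≤ p,q ≤ ∞`. -/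
theorem stmt10 {X : Type*} [MetricSpace X] [MeasurableSpace X] [BorelSpace X]
    [LocallyCompactSpace X] [TopologicalSpace.SeparableSpace X]
    (μ : Measure X) [μ.Regular]
    (hμ : ∀ (x : X) (r : ℝ), 0 < r → 0 < μ (Metric.ball x r) ∧ μ (Metric.ball x r) < ⊤)
    (p q : ℝ≥0∞) (hp : 1 ≤ p) (hq : 1 ≤ q) (hpq : p⁻¹ + q⁻¹ = 1)
    (F G : Measure X → ℝ) :
    LpNormE μ 1 (fun η => F η * G η) ≤ LpNormE μ p F * LpNormE μ q G :=
  stmt10_general μ p q hpq F G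
end

section
/- 𝓛^p(𝓧) with the norm ‖F‖_{𝓛^p} = sup{ (Σᵢ₌₁ᵏ |F(ηᵢ)|^p ‖ηᵢ‖)^{1/p} : ηᵢ ∈ 𝓧 pairwise disjointly supported } is a Banach space: every Cauchy sequence in this norm converges in the norm to a function in 𝓛^p(𝓧). -/
open MeasureTheory Set Filter
open scoped ENNReal Classical

variable {X : Type*} [MetricSpace X] [MeasurableSpace X]

section Aux

lemma aux_compl_null [TopologicalSpace.SeparableSpace X]
    (ν : Measure X) : ν (msupp ν)ᶜ = 0 := by
  haveI : SecondCountableTopology X := UniformSpace.secondCountable_of_separable X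
  have hmem : ∀ x : ((msupp ν)ᶜ : Set X), ∃ ε : ℝ, 0 < ε ∧ ν (Metric.ball (x : X) ε) = 0 := by
    rintro ⟨x, hx⟩
    simp only [msupp, mem_compl_iff, mem_setOf_eq, not_forall] at hx
    obtain ⟨ε, hε, h⟩ := hx
    exact ⟨ε, hε, by simpa using h⟩
  choose ε hεpos hεnull using hmem
  obtain ⟨T, hTc, hTeq⟩ := TopologicalSpace.isOpen_iUnion_countable
    (fun x : ((msupp ν)ᶜ : Set X) => Metric.ball (x : X) (ε x)) (fun x => Metric.isOpen_ball)
  have hsub : (msupp ν)ᶜ ⊆ ⋃ x ∈ T, Metric.ball (x : X) (ε x) := by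
    rw [hTeq]
    intro y hy
    exact mem_iUnion.2 ⟨⟨y, hy⟩, Metric.mem_ball_self (hεpos ⟨y, hy⟩)⟩
  refine measure_mono_null hsub ?_
  exact (measure_biUnion_null_iff hTc).2 fun x _ => hεnull x

lemma aux_univ_lt_top [TopologicalSpace.SeparableSpace X]
    {μ : Measure X} [μ.Regular] {ν : Measure X} (hν : ν ∈ MM μ) : ν Set.univ < ⊤ := by
  have h1 : ν Set.univ ≤ ν (msupp ν) + ν (msupp ν)ᶜ := by
    rw [← Set.union_compl_self (msupp ν)]; exact measure_union_le _ _
  rw [aux_compl_null ν, add_zero] at h1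
  calc ν Set.univ ≤ ν (msupp ν) := h1
    _ ≤ μ (msupp ν) := Measure.le_iff'.mp hν.1 _
    _ < ⊤ := hν.2.measure_lt_top

lemma aux_single (μ : Measure X) (p : ℝ) (G : Measure X → ℝ≥0∞) {η : Measure X}
    (h1 : η ∈ MM μ) (h2 : η ≠ 0) : (G η) ^ p * η Set.univ ≤ LpPow μ p G := by
  apply le_sSup
  refine ⟨1, fun _ => η, fun _ => ⟨h1, h2⟩, fun i j hij => absurd (Subsingleton.elim i j) hij, ?_⟩
  simp [LpPow]

lemma aux_mono (μ : Measure X) {p : ℝ} (hp : 0 ≤ p) {A B : Measure X → ℝ≥0∞}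
    (h : ∀ η, η ∈ MM μ → η ≠ 0 → A η ≤ B η) : LpPow μ p A ≤ LpPow μ p B := by
  apply sSup_le
  rintro r ⟨k, η, h1, h2, rfl⟩
  calc ∑ i, (A (η i)) ^ p * (η i) Set.univ
      ≤ ∑ i, (B (η i)) ^ p * (η i) Set.univ := by
        refine Finset.sum_le_sum fun i _ => ?_
        exact mul_le_mul_left (ENNReal.rpow_le_rpow (h _ (h1 i).1 (h1 i).2) hp) _
    _ ≤ LpPow μ p B := le_sSup ⟨k, η, h1, h2, rfl⟩

lemma aux_add (μ : Measure X) {p : ℝ} (hp : 0 ≤ p) (A B : Measure X → ℝ≥0∞) :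
    LpPow μ p (fun η => A η + B η) ≤ 2 ^ p * (LpPow μ p A + LpPow μ p B) := by
  apply sSup_le
  rintro r ⟨k, η, h1, h2, rfl⟩
  have key : ∀ i : Fin k, (A (η i) + B (η i)) ^ p * (η i) Set.univ
      ≤ 2 ^ p * ((A (η i)) ^ p * (η i) Set.univ + (B (η i)) ^ p * (η i) Set.univ) := by
    intro i
    have h3 : A (η i) + B (η i) ≤ 2 * max (A (η i)) (B (η i)) := by
      rw [two_mul]; exact add_le_add (le_max_left _ _) (le_max_right _ _)
    have h4 : (A (η i) + B (η i)) ^ p ≤ 2 ^ p * ((A (η i)) ^ p + (B (η i)) ^ p) := by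
      calc (A (η i) + B (η i)) ^ p ≤ (2 * max (A (η i)) (B (η i))) ^ p :=
            ENNReal.rpow_le_rpow h3 hp
        _ = 2 ^ p * (max (A (η i)) (B (η i))) ^ p := ENNReal.mul_rpow_of_nonneg _ _ hp
        _ ≤ 2 ^ p * ((A (η i)) ^ p + (B (η i)) ^ p) := by
            apply mul_le_mul_right
            rcases max_cases (A (η i)) (B (η i)) with ⟨h, _⟩ | ⟨h, _⟩ <;> rw [h]
            · exact le_add_right le_rfl
            · exact le_add_left le_rfl
    calc (A (η i) + B (η i)) ^ p * (η i) Set.univ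
        ≤ 2 ^ p * ((A (η i)) ^ p + (B (η i)) ^ p) * (η i) Set.univ :=
          mul_le_mul_left h4 _
      _ = 2 ^ p * ((A (η i)) ^ p * (η i) Set.univ + (B (η i)) ^ p * (η i) Set.univ) := by
          ring
  calc ∑ i, (A (η i) + B (η i)) ^ p * (η i) Set.univ
      ≤ ∑ i, 2 ^ p * ((A (η i)) ^ p * (η i) Set.univ + (B (η i)) ^ p * (η i) Set.univ) :=
        Finset.sum_le_sum fun i _ => key i
    _ = 2 ^ p * ((∑ i, (A (η i)) ^ p * (η i) Set.univ) + ∑ i, (B (η i)) ^ p * (η i) Set.univ) := by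
        rw [← Finset.mul_sum, Finset.sum_add_distrib]
    _ ≤ 2 ^ p * (LpPow μ p A + LpPow μ p B) := by
        have hA : (∑ i, (A (η i)) ^ p * (η i) Set.univ) ≤ LpPow μ p A := le_sSup ⟨k, η, h1, h2, rfl⟩
        have hB : (∑ i, (B (η i)) ^ p * (η i) Set.univ) ≤ LpPow μ p B := le_sSup ⟨k, η, h1, h2, rfl⟩
        exact mul_le_mul_right (add_le_add hA hB) _

end Aux

/-- `𝓛^p(𝓧)` is a Banach space: every Cauchy sequence for the
`𝓛^p` norm converges in norm to a function of finite norm. -/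
theorem stmt11 {X : Type*} [MetricSpace X] [MeasurableSpace X] [BorelSpace X]
    [LocallyCompactSpace X] [TopologicalSpace.SeparableSpace X]
    (μ : Measure X) [μ.Regular]
    (hμ : ∀ (x : X) (r : ℝ), 0 < r → 0 < μ (Metric.ball x r) ∧ μ (Metric.ball x r) < ⊤)
    (p : ℝ) (hp : 1 ≤ p) (F : ℕ → Measure X → ℝ)
    (hfin : ∀ n, LpNorm μ p (F n) < ⊤)
    (hcauchy : ∀ ε : ℝ, 0 < ε → ∃ N : ℕ, ∀ m ≥ N, ∀ n ≥ N,
      LpNorm μ p (fun η => F m η - F n η) < ENNReal.ofReal ε) :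
    ∃ G : Measure X → ℝ, LpNorm μ p G < ⊤ ∧
      Tendsto (fun n => LpNorm μ p (fun η => F n η - G η)) atTop (nhds 0) := by
  classical
  have hp0 : 0 < p := lt_of_lt_of_le one_pos hp
  have hp0' : (0:ℝ) ≤ p := le_of_lt hp0
  set Φ : (Measure X → ℝ) → ℝ≥0∞ :=
    fun F => LpPow μ p (fun η => ENNReal.ofReal |F η|) with hΦdef
  have hLp : ∀ Fm : Measure X → ℝ, LpNorm μ p Fm = (Φ Fm) ^ (1/p) := fun _ => rfl
  have hppos : (0:ℝ) < 1/p := by positivity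
  -- Cauchy condition in LpPow form
  have hcauchy' : ∀ ε : ℝ, 0 < ε → ∃ N, ∀ m ≥ N, ∀ n ≥ N,
      Φ (fun η => F m η - F n η) ≤ ENNReal.ofReal ε ^ p := by
    intro ε hε
    obtain ⟨N, hN⟩ := hcauchy ε hε
    refine ⟨N, fun m hm n hn => ?_⟩
    have h1 := hN m hm n hn
    rw [hLp] at h1
    have h2 : (Φ (fun η => F m η - F n η) ^ (1/p)) ^ p ≤ ENNReal.ofReal ε ^ p :=
      ENNReal.rpow_le_rpow h1.le hp0'
    rwa [← ENNReal.rpow_mul, one_div_mul_cancel hp0.ne', ENNReal.rpow_one] at h2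
  -- pointwise convergence on 𝓧
  have hptw : ∀ η : Measure X, η ∈ MM μ → η ≠ 0 →
      ∃ lv : ℝ, Tendsto (fun n => F n η) atTop (nhds lv) := by
    intro η hη hη0
    have hw0 : η Set.univ ≠ 0 := by
      simpa [Measure.measure_univ_eq_zero] using hη0
    have hwt : η Set.univ ≠ ⊤ := (aux_univ_lt_top hη).ne
    apply cauchySeq_tendsto_of_complete
    rw [Metric.cauchySeq_iff]
    intro ε' hε'
    set w : ℝ := (η Set.univ).toReal with hwdef
    have hwpos : 0 < w := ENNReal.toReal_pos hw0 hwt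
    set δ : ℝ := (ε' / 2) * w ^ (1/p) with hδdef
    have hδpos : 0 < δ := by positivity
    obtain ⟨N, hN⟩ := hcauchy' δ hδpos
    refine ⟨N, fun m hm n hn => ?_⟩
    have h1 := (aux_single μ p (fun η => ENNReal.ofReal |F m η - F n η|) hη hη0).trans
      (hN m hm n hn)
    set d : ℝ := |F m η - F n η| with hddef
    have hd0 : (0:ℝ) ≤ d := abs_nonneg _
    have heq : (ENNReal.ofReal d) ^ p * η Set.univ = ENNReal.ofReal (d ^ p * w) := by
      rw [ENNReal.ofReal_rpow_of_nonneg hd0 hp0', ENNReal.ofReal_mul (by positivity),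
        hwdef, ENNReal.ofReal_toReal hwt]
    have heq2 : (ENNReal.ofReal δ) ^ p = ENNReal.ofReal (δ ^ p) :=
      ENNReal.ofReal_rpow_of_nonneg hδpos.le hp0'
    rw [heq, heq2] at h1
    have h3 : d ^ p * w ≤ δ ^ p := by
      have := (ENNReal.ofReal_le_ofReal_iff (by positivity)).mp h1
      exact this
    have hδp : δ ^ p = (ε'/2) ^ p * w := by
      rw [hδdef, Real.mul_rpow (by positivity) (by positivity)]
      rw [← Real.rpow_mul hwpos.le, one_div_mul_cancel hp0.ne', Real.rpow_one]
    rw [hδp] at h3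
    have h4 : d ^ p ≤ (ε'/2) ^ p := le_of_mul_le_mul_right h3 hwpos
    have h5 : d ≤ ε'/2 := by
      by_contra hcon
      push_neg at hcon
      exact absurd h4 (not_le.2 (Real.rpow_lt_rpow (by positivity) hcon hp0))
    have : dist (F m η) (F n η) = d := Real.dist_eq _ _
    rw [this]
    linarith
  choose! G hG using hptw
  -- key approximation bound
  have key : ∀ (n : ℕ) (C : ℝ≥0∞) (N : ℕ),
      (∀ m ≥ N, Φ (fun η => F m η - F n η) ≤ C) →
      Φ (fun η => F n η - G η) ≤ C := by
    intro n C N hC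
    apply sSup_le
    rintro r ⟨k, ηf, h1, h2, rfl⟩
    set S : ℕ → ℝ≥0∞ := fun m =>
      ∑ i, (ENNReal.ofReal |F m (ηf i) - F n (ηf i)|) ^ p * (ηf i) Set.univ with hSdef
    have hSle : ∀ m ≥ N, S m ≤ C := by
      intro m hm
      have hm1 : S m ≤ Φ (fun η => F m η - F n η) := le_sSup ⟨k, ηf, h1, h2, rfl⟩
      exact hm1.trans (hC m hm)
    have hT : Tendsto S atTop
        (nhds (∑ i, (ENNReal.ofReal |F n (ηf i) - G (ηf i)|) ^ p * (ηf i) Set.univ)) := by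
      apply tendsto_finset_sum
      intro i _
      have hti : Tendsto (fun m => F m (ηf i)) atTop (nhds (G (ηf i))) :=
        hG _ (h1 i).1 (h1 i).2
      have ht2 : Tendsto (fun m => |F m (ηf i) - F n (ηf i)|) atTop
          (nhds (|F n (ηf i) - G (ηf i)|)) := by
        rw [abs_sub_comm]
        exact (hti.sub_const _).abs
      have ht3 : Tendsto (fun m => (ENNReal.ofReal |F m (ηf i) - F n (ηf i)|) ^ p) atTop
          (nhds ((ENNReal.ofReal |F n (ηf i) - G (ηf i)|) ^ p)) :=
        (ENNReal.continuous_rpow_const.tendsto _).comp (ENNReal.tendsto_ofReal ht2)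
      exact ENNReal.Tendsto.mul_const ht3 (Or.inr (aux_univ_lt_top (h1 i).1).ne)
    exact le_of_tendsto hT (eventually_atTop.2 ⟨N, hSle⟩)
  have main : ∀ ε : ℝ, 0 < ε → ∃ N, ∀ n ≥ N,
      Φ (fun η => F n η - G η) ≤ ENNReal.ofReal ε ^ p := by
    intro ε hε
    obtain ⟨N, hN⟩ := hcauchy' ε hε
    exact ⟨N, fun n hn => key n _ N (fun m hm => hN m hm n hn)⟩
  refine ⟨G, ?_, ?_⟩
  -- finiteness of the norm of G
  · obtain ⟨N₁, hN₁⟩ := main 1 one_pos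
    have hFN : Φ (F N₁) ≠ ⊤ := by
      intro hcon
      have := hfin N₁
      rw [hLp, hcon] at this
      rw [ENNReal.top_rpow_of_pos hppos] at this; exact absurd this (lt_irrefl _)
    have hbound : Φ G ≤ 2 ^ p *
        (Φ (fun η => F N₁ η - G η) + Φ (F N₁)) := by
      refine le_trans (aux_mono μ hp0' (A := fun η => ENNReal.ofReal |G η|)
        (B := fun η => ENNReal.ofReal |F N₁ η - G η| + ENNReal.ofReal |F N₁ η|) ?_)
        (aux_add μ hp0' _ _)
      intro η _ _
      calc ENNReal.ofReal |G η| ≤ ENNReal.ofReal (|F N₁ η - G η| + |F N₁ η|) := by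
            apply ENNReal.ofReal_le_ofReal
            calc |G η| = |(F N₁ η - G η) - F N₁ η| := by
                  rw [show (F N₁ η - G η) - F N₁ η = -G η by ring, abs_neg]
              _ ≤ |F N₁ η - G η| + |F N₁ η| := abs_sub _ _
        _ ≤ ENNReal.ofReal |F N₁ η - G η| + ENNReal.ofReal |F N₁ η| :=
            ENNReal.ofReal_add_le
    have hfin2 : Φ G < ⊤ := by
      refine lt_of_le_of_lt hbound ?_
      apply ENNReal.mul_lt_top
      · exact ENNReal.rpow_lt_top_of_nonneg hp0' (by norm_num)
      · exact ENNReal.add_lt_top.2 ⟨lt_of_le_of_lt (hN₁ N₁ le_rfl)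
          (ENNReal.rpow_lt_top_of_nonneg hp0' ENNReal.ofReal_ne_top), hFN.lt_top⟩
    rw [hLp]
    exact ENNReal.rpow_lt_top_of_nonneg hppos.le hfin2.ne
  -- convergence
  · rw [ENNReal.tendsto_atTop_zero]
    intro ε hε
    set t : ℝ := (min 1 ε).toReal with htdef
    have hmin0 : (0:ℝ≥0∞) < min 1 ε := lt_min one_pos hε
    have hminT : min 1 ε ≠ ⊤ := (lt_of_le_of_lt (min_le_left _ _) ENNReal.one_lt_top).ne
    have ht0 : 0 < t := ENNReal.toReal_pos hmin0.ne' hminT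
    obtain ⟨N, hN⟩ := main t ht0
    refine ⟨N, fun n hn => ?_⟩
    have h1 := hN n hn
    have h2 : (Φ (fun η => F n η - G η)) ^ (1/p) ≤ (ENNReal.ofReal t ^ p) ^ (1/p) :=
      ENNReal.rpow_le_rpow h1 hppos.le
    rw [← ENNReal.rpow_mul, mul_one_div_cancel hp0.ne', ENNReal.rpow_one] at h2
    calc LpNorm μ p (fun η => F n η - G η) ≤ ENNReal.ofReal t := by rw [hLp]; exact h2
      _ = min 1 ε := by rw [htdef, ENNReal.ofReal_toReal hminT]
      _ ≤ ε := min_le_right _ _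
end

section
/- Characterization of mean-value functionals: a function F : 𝓧 → ℝ is of the form F_f for some f ∈ L¹_loc(X) if and only if the extension G_F : 𝓜 → ℝ given by G_F(η) = ‖η‖F(η) (and G_F(0)=0) satisfies G_F(tη) = t·G_F(η) for all t ∈ [0,1], η ∈ 𝓜, and G_F(Σᵢ ηᵢ) = Σᵢ G_F(ηᵢ) whenever ηᵢ ∈ 𝓜 and Σᵢ ηᵢ ∈ 𝓜. -/
open MeasureTheory Set Filter
open scoped ENNReal Classical

variable {X : Type*} [MetricSpace X] [MeasurableSpace X]

/-- The extension `G_F(η) = ‖η‖ F(η)` of `F : 𝓧 → ℝ` to `𝓜`, with `G_F = 0` outside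
`𝓧`. -/
noncomputable def GFext {X : Type*} [MetricSpace X] [MeasurableSpace X]
    (μ : Measure X) (F : Measure X → ℝ) (η : Measure X) : ℝ :=
  if η ∈ MM μ ∧ η ≠ 0 then mass η * F η else 0

/-!
If `F = F_f`, then `G_F(η) = ∫ f dη`, which is homogeneous and countably additive in `η`.
Conversely, for `A` ranging over the measurable subsets of a compact set, `A ↦ G_F(μ|_A)` is a
signed measure absolutely continuous with respect to `μ`; its Radon–Nikodym densities on the
layers of a compact exhaustion glue to some `f ∈ L¹_loc`.
A general `η ∈ 𝓜` has a density `ρ ≤ 1` with respect to `μ|_{supp η}`, and the binary expansion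
`ρ = ∑ₘ 2^{-(m+1)} 1_{Aₘ}` writes `η = ∑ₘ 2^{-(m+1)} μ|_{Aₘ}`; homogeneity and additivity then
give `G_F(η) = ∫ f dη`.
-/

open Function Topology

section Densities

variable {α : Type*} [MeasurableSpace α]

/-- Greedy binary expansion: the `m`-th digit is taken whenever it still fits below `g`. -/
theorem exists_tsum_indicator_two_inv_pow_eq {g : α → ℝ≥0∞} (hg : Measurable g)
    (hg1 : ∀ x, g x ≤ 1) :
    ∃ A : ℕ → Set α, (∀ m, MeasurableSet (A m)) ∧
      ∀ x, ∑' m, (A m).indicator (fun _ => (2⁻¹ : ℝ≥0∞) ^ (m + 1)) x = g x := by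
  let c : ℕ → ℝ≥0∞ := fun m => 2⁻¹ ^ (m + 1)
  let s : ℕ → α → ℝ≥0∞ := fun n =>
    Nat.rec 0 (fun k sk => sk + {x | sk x + c k ≤ g x}.indicator fun _ => c k) n
  let A : ℕ → Set α := fun k => {x | s k x + c k ≤ g x}
  have hs_succ : ∀ k, s (k + 1) = s k + (A k).indicator fun _ => c k := fun _ => rfl
  have hs_meas : ∀ k, Measurable (s k) := by
    intro k
    induction k with
    | zero => exact measurable_const
    | succ k ih =>
      rw [hs_succ]
      exact ih.add (measurable_const.indicator (measurableSet_le (ih.add_const _) hg))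
  have hA : ∀ k, MeasurableSet (A k) := fun k => measurableSet_le ((hs_meas k).add_const _) hg
  have hs_sum : ∀ N x, ∑ m ∈ Finset.range N, (A m).indicator (fun _ => c m) x = s N x := by
    intro N x
    induction N with
    | zero => rfl
    | succ N ih => rw [Finset.sum_range_succ, ih, hs_succ, Pi.add_apply]
  have hc_two : ∀ k, (2⁻¹ : ℝ≥0∞) ^ k = c k + c k := fun k => by
    show _ = 2⁻¹ ^ (k + 1) + 2⁻¹ ^ (k + 1)
    rw [← two_mul, pow_succ', ← mul_assoc, ENNReal.mul_inv_cancel two_ne_zero ENNReal.ofNat_ne_top,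
      one_mul]
  have hs_bounds : ∀ N x, s N x ≤ g x ∧ g x ≤ s N x + 2⁻¹ ^ N := by
    intro N x
    induction N with
    | zero => exact ⟨bot_le, by simpa [s] using hg1 x⟩
    | succ N ih =>
      rw [hs_succ, Pi.add_apply]
      by_cases hx : x ∈ A N
      · rw [indicator_of_mem hx]
        refine ⟨hx, ih.2.trans ?_⟩
        rw [hc_two N, add_assoc]
      · rw [indicator_of_notMem hx, add_zero]
        exact ⟨ih.1, (not_le.1 hx).le⟩
  refine ⟨A, hA, fun x => le_antisymm ?_ ?_⟩
  · exact ENNReal.tsum_le_of_sum_range_le fun N => (hs_sum N x).trans_le (hs_bounds N x).1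
  · have hlim : Tendsto (fun N => ∑' m, (A m).indicator (fun _ => c m) x + 2⁻¹ ^ N) atTop
        (𝓝 (∑' m, (A m).indicator (fun _ => c m) x + 0)) :=
      tendsto_const_nhds.add (ENNReal.tendsto_pow_atTop_nhds_zero_of_lt_one
        (ENNReal.inv_lt_one.2 ENNReal.one_lt_two))
    rw [add_zero] at hlim
    refine ge_of_tendsto' hlim fun N => (hs_bounds N x).2.trans ?_
    rw [← hs_sum]
    exact add_le_add_left (ENNReal.sum_le_tsum _) _

theorem exists_eq_sum_ofReal_smul_restrict {μ η : Measure α} [SigmaFinite μ] (h : η ≤ μ) :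
    ∃ (t : ℕ → ℝ) (A : ℕ → Set α), (∀ m, t m ∈ Icc (0 : ℝ) 1) ∧ (∀ m, MeasurableSet (A m)) ∧
      η = Measure.sum fun m => ENNReal.ofReal (t m) • μ.restrict (A m) := by
  have := Measure.sigmaFinite_of_le μ h
  set ρ : α → ℝ≥0∞ := fun x => min (η.rnDeriv μ x) 1
  have hρ : μ.withDensity ρ = η := by
    rw [withDensity_congr_ae (g := η.rnDeriv μ), Measure.withDensity_rnDeriv_eq η μ
      h.absolutelyContinuous]
    filter_upwards [Measure.rnDeriv_le_one_of_le h] with x hx using min_eq_left hx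
  obtain ⟨A, hA, hsum⟩ := exists_tsum_indicator_two_inv_pow_eq
    ((Measure.measurable_rnDeriv η μ).min measurable_const) fun x => min_le_right _ 1
  refine ⟨fun m => 2⁻¹ ^ (m + 1), A, fun m => ⟨by positivity,
    pow_le_one₀ (by norm_num) (by norm_num)⟩, hA, ?_⟩
  have hρ_tsum : ρ = ∑' m, (A m).indicator fun _ => (2⁻¹ : ℝ≥0∞) ^ (m + 1) := by
    ext x
    rw [tsum_apply (Pi.summable.2 fun _ => ENNReal.summable), hsum]
  rw [← hρ, hρ_tsum, withDensity_tsum fun m => measurable_const.indicator (hA m)]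
  congr 1
  ext1 m
  rw [withDensity_indicator (hA m), withDensity_const, ENNReal.ofReal_pow (by norm_num),
    ENNReal.ofReal_inv_of_pos two_pos, ENNReal.ofReal_ofNat]

theorem exists_integrableOn_setIntegral_eq (μ : Measure α) {S : Set α} (hS : MeasurableSet S)
    (hμS : μ S < ∞) {φ : Set α → ℝ}
    (hφ : ∀ s : ℕ → Set α, (∀ i, MeasurableSet (s i)) → Pairwise (Disjoint on s) →
      (∀ i, s i ⊆ S) → HasSum (fun i => φ (s i)) (φ (⋃ i, s i)))
    (hφ0 : ∀ A, μ A = 0 → φ A = 0) :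
    ∃ g : α → ℝ, IntegrableOn g S μ ∧
      ∀ A, MeasurableSet A → A ⊆ S → φ A = ∫ x in A, g x ∂μ := by
  have : IsFiniteMeasure (μ.restrict S) := ⟨by rwa [Measure.restrict_apply_univ]⟩
  let v : SignedMeasure α :=
    { measureOf' := fun s => if MeasurableSet s then φ (s ∩ S) else 0
      empty' := by simp [hφ0]
      not_measurable' := fun s hs => if_neg hs
      m_iUnion' := fun s hs hd => by
        simp only [if_pos (hs _), if_pos (MeasurableSet.iUnion hs), iUnion_inter]
        exact hφ _ (fun i => (hs i).inter hS) (hd.mono fun i j => Disjoint.mono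
          inter_subset_left inter_subset_left) fun i => inter_subset_right }
  have hv : ∀ A, MeasurableSet A → v A = φ (A ∩ S) := fun A hA => if_pos hA
  have hac : v ≪ᵥ (μ.restrict S).toENNRealVectorMeasure := by
    refine VectorMeasure.AbsolutelyContinuous.mk fun A hA hA0 => ?_
    rw [Measure.toENNRealVectorMeasure_apply_measurable hA, Measure.restrict_apply hA] at hA0
    rw [hv A hA, hφ0 _ hA0]
  refine ⟨v.rnDeriv (μ.restrict S), SignedMeasure.integrable_rnDeriv _ _, fun A hA hAS => ?_⟩
  calc φ A = v A := by rw [hv A hA, inter_eq_left.2 hAS]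
    _ = (μ.restrict S).withDensityᵥ (v.rnDeriv (μ.restrict S)) A := by
      rw [SignedMeasure.withDensityᵥ_rnDeriv_eq v _ hac]
    _ = ∫ x in A, v.rnDeriv (μ.restrict S) x ∂μ := by
      rw [withDensityᵥ_apply (SignedMeasure.integrable_rnDeriv _ _) hA,
        Measure.restrict_restrict hA, inter_eq_left.2 hAS]

end Densities

section Support

theorem msupp_eq_support (ν : Measure X) : msupp ν = ν.support := by
  ext x
  exact Metric.nhds_basis_ball.mem_measureSupport.symm

theorem isClosed_msupp (ν : Measure X) : IsClosed (msupp ν) :=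
  msupp_eq_support ν ▸ Measure.isClosed_support

theorem smul_mem_MM {μ η : Measure X} {c : ℝ≥0∞} (hc : c ≤ 1) (hη : η ∈ MM μ) :
    c • η ∈ MM μ := by
  refine ⟨(Measure.le_iff'.2 fun s => ?_).trans hη.1, hη.2.of_isClosed_subset (isClosed_msupp _) ?_⟩
  · exact mul_le_of_le_one_left bot_le hc
  · rw [msupp_eq_support, msupp_eq_support]
    exact (Measure.AbsolutelyContinuous.rfl.smul_left c).support_mono

theorem restrict_mem_MM [OpensMeasurableSpace X] {μ : Measure X} {A K : Set X}
    (hK : IsCompact K) (hAK : A ⊆ K) : μ.restrict A ∈ MM μ := by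
  refine ⟨Measure.restrict_le_self, hK.of_isClosed_subset (isClosed_msupp _) ?_⟩
  rw [msupp_eq_support]
  exact Measure.support_restrict_subset.trans
    (inter_subset_left.trans (closure_minimal hAK hK.isClosed))

variable [HereditarilyLindelofSpace X]

theorem restrict_msupp (ν : Measure X) : ν.restrict (msupp ν) = ν :=
  Measure.restrict_eq_self_of_ae_mem (msupp_eq_support ν ▸ Measure.support_mem_ae)

theorem isFiniteMeasure_of_mem_MM {μ η : Measure X} [IsFiniteMeasureOnCompacts μ]
    (hη : η ∈ MM μ) : IsFiniteMeasure η := by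
  refine ⟨?_⟩
  rw [← restrict_msupp η, Measure.restrict_apply_univ]
  exact (Measure.le_iff'.1 hη.1 _).trans_lt hη.2.measure_lt_top

theorem integrable_of_mem_MM {μ η : Measure X} {f : X → ℝ} (hf : LocallyIntegrable f μ)
    (hη : η ∈ MM μ) : Integrable f η := by
  rw [← restrict_msupp η]
  exact Integrable.mono_measure (hf.integrableOn_isCompact hη.2)
    (Measure.restrict_mono subset_rfl hη.1)

end Support

section MeanValue

variable {μ η : Measure X} {F : Measure X → ℝ} {f : X → ℝ}

theorem GFext_eq_integral_iff [HereditarilyLindelofSpace X]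
    [IsFiniteMeasureOnCompacts μ] (hη : η ∈ MM μ) (hne : η ≠ 0) :
    GFext μ F η = ∫ x, f x ∂η ↔ F η = FfM f η := by
  have := isFiniteMeasure_of_mem_MM hη
  have hmass : mass η ≠ 0 :=
    ENNReal.toReal_ne_zero.2 ⟨Measure.measure_univ_ne_zero.2 hne, measure_ne_top η univ⟩
  rw [GFext, if_pos ⟨hη, hne⟩, FfM, eq_div_iff hmass, mul_comm]

theorem GFext_eq_integral [HereditarilyLindelofSpace X] [IsFiniteMeasureOnCompacts μ]
    (hF : ∀ η ∈ MM μ, η ≠ 0 → F η = FfM f η) (hη : η ∈ MM μ) :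
    GFext μ F η = ∫ x, f x ∂η := by
  rcases eq_or_ne η 0 with rfl | hne
  · simp [GFext]
  · exact (GFext_eq_integral_iff hη hne).2 (hF η hη hne)

theorem hasSum_GFext_restrict_iUnion [OpensMeasurableSpace X]
    (hadd : ∀ ηi : ℕ → Measure X, (∀ i, ηi i ∈ MM μ) → Measure.sum ηi ∈ MM μ →
      HasSum (fun i => GFext μ F (ηi i)) (GFext μ F (Measure.sum ηi)))
    {K : Set X} (hK : IsCompact K) (s : ℕ → Set X) (hs : ∀ i, MeasurableSet (s i))
    (hd : Pairwise (Disjoint on s)) (hsK : ∀ i, s i ⊆ K) :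
    HasSum (fun i => GFext μ F (μ.restrict (s i))) (GFext μ F (μ.restrict (⋃ i, s i))) := by
  rw [Measure.restrict_iUnion hd hs]
  exact hadd _ (fun i => restrict_mem_MM hK (hsK i))
    (Measure.restrict_iUnion hd hs ▸ restrict_mem_MM hK (iUnion_subset hsK))

end MeanValue

theorem exists_locallyIntegrable_setIntegral_eq [OpensMeasurableSpace X] [LocallyCompactSpace X]
    [SigmaCompactSpace X] (μ : Measure X) [IsFiniteMeasureOnCompacts μ] {φ : Set X → ℝ}
    (hφ : ∀ K, IsCompact K → ∀ s : ℕ → Set X, (∀ i, MeasurableSet (s i)) →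
      Pairwise (Disjoint on s) → (∀ i, s i ⊆ K) → HasSum (fun i => φ (s i)) (φ (⋃ i, s i)))
    (hφ0 : ∀ A, μ A = 0 → φ A = 0) :
    ∃ f : X → ℝ, LocallyIntegrable f μ ∧
      ∀ K, IsCompact K → ∀ A, MeasurableSet A → A ⊆ K → φ A = ∫ x in A, f x ∂μ := by
  let E := CompactExhaustion.choice X
  let D : ℕ → Set X := fun n => E.find ⁻¹' {n}
  have hfind : Measurable E.find := measurable_of_Iic fun n => by
    have : E.find ⁻¹' Iic n = E n := by ext x; exact E.mem_iff_find_le.symm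
    exact this ▸ (E.isCompact n).measurableSet
  have hD : ∀ n, MeasurableSet (D n) := fun n => hfind (measurableSet_singleton n)
  have hDE : ∀ n, D n ⊆ E n := fun n x hx => E.mem_iff_find_le.2 (le_of_eq hx)
  choose g hg hφg using fun n => exists_integrableOn_setIntegral_eq μ (hD n)
    ((measure_mono (hDE n)).trans_lt (E.isCompact n).measure_lt_top)
    (fun s hs hsd hsD => hφ _ (E.isCompact n) s hs hsd fun i => (hsD i).trans (hDE n)) hφ0
  let f : X → ℝ := fun x => g (E.find x) x
  have hfg : ∀ n, EqOn f (g n) (D n) := fun n x hx => by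
    simp only [f, show E.find x = n from hx]
  have hf : LocallyIntegrable f μ := by
    refine locallyIntegrable_iff.2 fun K hK => ?_
    obtain ⟨n, hKn⟩ := E.exists_superset_of_isCompact hK
    have hKD : K ⊆ ⋃ m ∈ Finset.range (n + 1), D m := fun x hx =>
      mem_biUnion (Finset.mem_range.2 (Nat.lt_succ_of_le (E.mem_iff_find_le.1 (hKn hx)))) rfl
    exact (integrableOn_finset_iUnion.2 fun m _ =>
      (hg m).congr_fun (hfg m).symm (hD m)).mono_set hKD
  refine ⟨f, hf, fun K hK A hA hAK => ?_⟩
  have hAD : ⋃ n, A ∩ D n = A := by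
    rw [← inter_iUnion, ← preimage_iUnion, iUnion_of_singleton, preimage_univ, inter_univ]
  have hmeas : ∀ n, MeasurableSet (A ∩ D n) := fun n => hA.inter (hD n)
  have hdisj : Pairwise (Disjoint on fun n => A ∩ D n) := fun m n hmn =>
    ((disjoint_singleton.2 hmn).preimage E.find).mono inter_subset_right inter_subset_right
  have hφsum := hφ K hK _ hmeas hdisj fun n => inter_subset_left.trans hAK
  have hint := hasSum_integral_iUnion hmeas hdisj
    (hAD ▸ (hf.integrableOn_isCompact hK).mono_set hAK)
  rw [hAD] at hφsum hint
  have hterm : ∀ n, φ (A ∩ D n) = ∫ x in A ∩ D n, f x ∂μ := fun n => by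
    rw [hφg n _ (hmeas n) inter_subset_right]
    exact setIntegral_congr_fun (hmeas n) fun x hx => (hfg n hx.2).symm
  exact hφsum.unique (funext hterm ▸ hint)

theorem GFext_eq_integral_of_forall_restrict [OpensMeasurableSpace X]
    [HereditarilyLindelofSpace X] {μ : Measure X} [IsFiniteMeasureOnCompacts μ]
    {F : Measure X → ℝ} {f : X → ℝ}
    (hhom : ∀ t ∈ Icc (0:ℝ) 1, ∀ η ∈ MM μ, GFext μ F (ENNReal.ofReal t • η) = t * GFext μ F η)
    (hadd : ∀ ηi : ℕ → Measure X, (∀ i, ηi i ∈ MM μ) → Measure.sum ηi ∈ MM μ →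
      HasSum (fun i => GFext μ F (ηi i)) (GFext μ F (Measure.sum ηi)))
    (hf : LocallyIntegrable f μ)
    (hfA : ∀ K, IsCompact K → ∀ A, MeasurableSet A → A ⊆ K →
      GFext μ F (μ.restrict A) = ∫ x in A, f x ∂μ)
    {η : Measure X} (hη : η ∈ MM μ) : GFext μ F η = ∫ x, f x ∂η := by
  set K := msupp η
  have hKm : MeasurableSet K := (isClosed_msupp η).measurableSet
  have : IsFiniteMeasure (μ.restrict K) := isFiniteMeasure_restrict.2 hη.2.measure_lt_top.ne
  obtain ⟨t, A, ht, hA, hηA⟩ := exists_eq_sum_ofReal_smul_restrict (μ := μ.restrict K)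
    (restrict_msupp η ▸ Measure.restrict_mono subset_rfl hη.1)
  simp only [Measure.restrict_restrict (hA _)] at hηA
  have hMM : ∀ m, μ.restrict (A m ∩ K) ∈ MM μ := fun m => restrict_mem_MM hη.2 inter_subset_right
  have hterm : ∀ m, GFext μ F (ENNReal.ofReal (t m) • μ.restrict (A m ∩ K)) =
      ∫ x, f x ∂(ENNReal.ofReal (t m) • μ.restrict (A m ∩ K)) := fun m => by
    rw [hhom _ (ht m) _ (hMM m), hfA K hη.2 _ ((hA m).inter hKm) inter_subset_right,
      integral_smul_measure, ENNReal.toReal_ofReal (ht m).1, smul_eq_mul]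
  have hsum := hadd _ (fun m => smul_mem_MM (ENNReal.ofReal_le_one.2 (ht m).2) (hMM m))
    (hηA ▸ hη)
  have hint := hasSum_integral_measure (f := f) (hηA ▸ integrable_of_mem_MM hf hη)
  rw [← hηA] at hsum hint
  exact hsum.unique (funext hterm ▸ hint)

theorem stmt14_general {X : Type*} [MetricSpace X] [MeasurableSpace X] [BorelSpace X]
    [LocallyCompactSpace X] [TopologicalSpace.SeparableSpace X]
    (μ : Measure X) [μ.Regular]
    (F : Measure X → ℝ) :
    (∃ f : X → ℝ, LocallyIntegrable f μ ∧ ∀ η ∈ MM μ, η ≠ 0 → F η = FfM f η) ↔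
    ((∀ t ∈ Icc (0:ℝ) 1, ∀ η ∈ MM μ,
        GFext μ F (ENNReal.ofReal t • η) = t * GFext μ F η) ∧
     (∀ ηi : ℕ → Measure X, (∀ i, ηi i ∈ MM μ) → Measure.sum ηi ∈ MM μ →
        HasSum (fun i => GFext μ F (ηi i)) (GFext μ F (Measure.sum ηi)))) := by
  have : SecondCountableTopology X := UniformSpace.secondCountable_of_separable X
  constructor
  · rintro ⟨f, hf, hF⟩
    refine ⟨fun t ht η hη => ?_, fun ηi hηi hsum => ?_⟩
    · rw [GFext_eq_integral hF (smul_mem_MM (ENNReal.ofReal_le_one.2 ht.2) hη),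
        GFext_eq_integral hF hη, integral_smul_measure, ENNReal.toReal_ofReal ht.1, smul_eq_mul]
    · simp only [GFext_eq_integral hF (hηi _), GFext_eq_integral hF hsum]
      exact hasSum_integral_measure (integrable_of_mem_MM hf hsum)
  · rintro ⟨hhom, hadd⟩
    obtain ⟨f, hf, hfA⟩ := exists_locallyIntegrable_setIntegral_eq μ
      (φ := fun A => GFext μ F (μ.restrict A)) (fun K hK => hasSum_GFext_restrict_iUnion hadd hK)
      fun A hA => by simp [Measure.restrict_eq_zero.2 hA, GFext]
    exact ⟨f, hf, fun η hη hne =>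
      (GFext_eq_integral_iff hη hne).1 (GFext_eq_integral_of_forall_restrict hhom hadd hf hfA hη)⟩

/-- `F : 𝓧 → ℝ` is of the form `F_f` for some `f ∈ L¹_loc(X)` iff
`G_F` is positively homogeneous for `t ∈ [0,1]` and countably additive on `𝓜`. -/
theorem stmt14 {X : Type*} [MetricSpace X] [MeasurableSpace X] [BorelSpace X]
    [LocallyCompactSpace X] [TopologicalSpace.SeparableSpace X]
    (μ : Measure X) [μ.Regular]
    (hμ : ∀ (x : X) (r : ℝ), 0 < r → 0 < μ (Metric.ball x r) ∧ μ (Metric.ball x r) < ⊤)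
    (F : Measure X → ℝ) :
    (∃ f : X → ℝ, LocallyIntegrable f μ ∧ ∀ η ∈ MM μ, η ≠ 0 → F η = FfM f η) ↔
    ((∀ t ∈ Icc (0:ℝ) 1, ∀ η ∈ MM μ,
        GFext μ F (ENNReal.ofReal t • η) = t * GFext μ F η) ∧
     (∀ ηi : ℕ → Measure X, (∀ i, ηi i ∈ MM μ) → Measure.sum ηi ∈ MM μ →
        HasSum (fun i => GFext μ F (ηi i)) (GFext μ F (Measure.sum ηi)))) :=
  stmt14_general μ F
end
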